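/- Let B ∈ 𝕊_D and let 𝔼_B ⊆ V_D be the span of {e_I : I ∈ B}. If J is an interval contained in [1,D] with e_J ∈ 𝔼_B, then J ∈ B. -/

import Mathlib

open Finset

abbrev Vec := ℕ →₀ ZMod 2

/-- The basis vector `e_i`. -/
noncomputable def e (i : ℕ) : Vec := Finsupp.single i 1

/-- For an interval `p = (a,b)` (representing `[a,b]`), the vector `e_I = ∑_{i∈[a,b]} e_i`. -/
noncomputable def eI (p : ℕ × ℕ) : Vec := ∑ j ∈ Finset.Icc p.1 p.2, e j

/-- The map `ξ_i` on intervals. -/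
def tint (i : ℕ) (p : ℕ × ℕ) : ℕ × ℕ :=
  if i ≤ p.1 then (p.1 + 2, p.2 + 2)
  else if p.2 + 2 ≤ i then p
  else (p.1, p.2 + 2)

/-- The map `t_i` on sets of intervals: `t_i(B') = ξ_i(B') ∪ {[i,i]}`. -/
def tmap (i : ℕ) (B : Finset (ℕ × ℕ)) : Finset (ℕ × ℕ) :=
  B.image (tint i) ∪ {(i, i)}

/-- The inductively defined family `S_D`. -/
inductive IsS : ℕ → Finset (ℕ × ℕ) → Prop
  | empty (D : ℕ) : IsS D ∅
  | one : IsS 1 {(1, 1)}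
  | step (D i : ℕ) (B' : Finset (ℕ × ℕ)) (h1 : 1 ≤ i) (h2 : i ≤ D + 2)
      (h : IsS D B') : IsS (D + 2) (tmap i B')

def primEven (D k : ℕ) : Finset (ℕ × ℕ) := (Finset.Icc 1 k).image fun j => (j, D + 1 - j)
def primOddA (D k : ℕ) : Finset (ℕ × ℕ) := (Finset.Icc 1 k).image fun j => (j, D - j)
def primOddB (D k : ℕ) : Finset (ℕ × ℕ) := (Finset.Icc 1 k).image fun j => (j + 1, D + 1 - j)

/-- The primitive elements of `𝕊_D`. -/
def IsPrim (D : ℕ) (B : Finset (ℕ × ℕ)) : Prop :=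
  B = ∅ ∨
  (Even D ∧ ∃ k, 1 ≤ k ∧ k ≤ D / 2 ∧ B = primEven D k) ∨
  (Odd D ∧ ∃ k, Odd k ∧ 1 ≤ k ∧ k ≤ (D - 1) / 2 ∧ (B = primOddA D k ∨ B = primOddB D k))

/-- The inductively defined family `𝕊_D`. -/
inductive IsSS : ℕ → Finset (ℕ × ℕ) → Prop
  | prim (D : ℕ) (B : Finset (ℕ × ℕ)) : IsPrim D B → IsSS D B
  | one : IsSS 1 {(1, 1)}
  | step (D i : ℕ) (B' : Finset (ℕ × ℕ)) (h1 : 1 ≤ i) (h2 : i ≤ D + 2)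
      (h : IsSS D B') : IsSS (D + 2) (tmap i B')

/-- The subspace `𝔼_B` spanned by the `e_I`, `I ∈ B`. -/
noncomputable def EB (B : Finset (ℕ × ℕ)) : Submodule (ZMod 2) Vec :=
  Submodule.span (ZMod 2) (eI '' (B : Set (ℕ × ℕ)))

/-- Two intervals are non-touching. -/
def Nontouch (p q : ℕ × ℕ) : Prop := p.2 + 2 ≤ q.1 ∨ q.2 + 2 ≤ p.1

/-- `p ≺ q`: `p = [a,b]` is strictly nested inside `q = [a',b']`, i.e. `a' < a ≤ b < b'`. -/
def Nested (p q : ℕ × ℕ) : Prop := q.1 < p.1 ∧ p.1 ≤ p.2 ∧ p.2 < q.2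

/-- `η_D = e_1 + e_3 + ⋯ + e_D` (`D` odd). -/
noncomputable def eta (D : ℕ) : Vec := ∑ j ∈ (Finset.Icc 1 D).filter (fun j => j % 2 = 1), e j

noncomputable def Tfun (i k : ℕ) : Vec :=
  if k + 1 < i then e k
  else if k + 1 = i then e k + e (k + 1) + e (k + 2)
  else e (k + 2)

/-- The linear map `T_i : V_{D-2} → V_D`. -/
noncomputable def Tlin (i : ℕ) : Vec →ₗ[ZMod 2] Vec :=
  Finsupp.linearCombination (ZMod 2) (Tfun i)

/-- The inductively defined family `𝒻(V_D)` of subspaces. -/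
inductive IsF : ℕ → Submodule (ZMod 2) Vec → Prop
  | zero (D : ℕ) : IsF D ⊥
  | one : IsF 1 (Submodule.span (ZMod 2) {e 1})
  | step (D i : ℕ) (E' : Submodule (ZMod 2) Vec) (h1 : 1 ≤ i) (h2 : i ≤ D + 2)
      (h : IsF D E') :
      IsF (D + 2) (Submodule.map (Tlin i) E' ⊔ Submodule.span (ZMod 2) {e i})

/-- The subspace `V_D = ⟨e_1,…,e_D⟩`. -/
noncomputable def VD (D : ℕ) : Submodule (ZMod 2) Vec :=
  Submodule.span (ZMod 2) (e '' Set.Icc 1 D)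

/-- The symplectic form with `(e_i,e_j) = 1` iff `|i-j| = 1`. -/
noncomputable def symp (x y : Vec) : ZMod 2 :=
  x.sum fun i xi => xi * (y (i + 1) + if 1 ≤ i then y (i - 1) else 0)

/-!
Any two intervals of an admissible set are equal, non-touching or strictly nested, since this
holds for the primitive chains and is preserved by every `t_i`. Over `𝔽₂`, `e_J ∈ 𝔼_B` means
`e_J = ∑_{I ∈ S} e_I` for some `S ⊆ B`. Let `M ∈ S` have the smallest left endpoint: every other
interval of `S` lies strictly inside `M` or at distance at least two to its right, so the sum is
`1` at both ends of `M` and `0` left of `M` and just right of it. Comparing with `e_J` forces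
`M = J`.
-/

lemma tint_fst (i : ℕ) (p : ℕ × ℕ) : (tint i p).1 = if i ≤ p.1 then p.1 + 2 else p.1 := by
  unfold tint
  split_ifs <;> rfl

lemma tint_snd (i : ℕ) {p : ℕ × ℕ} (hp : p.1 ≤ p.2) :
    (tint i p).2 = if i ≤ p.2 + 1 then p.2 + 2 else p.2 := by
  unfold tint
  split_ifs <;> simp_all <;> omega

lemma tint_fst_le_snd (i : ℕ) {p : ℕ × ℕ} (hp : p.1 ≤ p.2) : (tint i p).1 ≤ (tint i p).2 := by
  rw [tint_fst i p, tint_snd i hp]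
  split_ifs <;> omega

def Compatible (p q : ℕ × ℕ) : Prop := p = q ∨ Nontouch p q ∨ Nested p q ∨ Nested q p

lemma Compatible.symm {p q : ℕ × ℕ} (h : Compatible p q) : Compatible q p := by
  unfold Compatible Nontouch at *
  tauto

lemma Compatible.tint (i : ℕ) {p q : ℕ × ℕ} (hp : p.1 ≤ p.2) (hq : q.1 ≤ q.2)
    (h : Compatible p q) : Compatible (tint i p) (tint i q) := by
  rcases h with rfl | h
  · exact Or.inl rfl
  · right
    simp only [Nontouch, Nested, tint_fst i p, tint_fst i q, tint_snd i hp, tint_snd i hq] at h ⊢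
    split_ifs <;> omega

lemma compatible_diag_tint (i : ℕ) {p : ℕ × ℕ} (hp : p.1 ≤ p.2) :
    Compatible (i, i) (tint i p) := by
  right
  simp only [Nontouch, Nested, tint_fst i p, tint_snd i hp]
  split_ifs <;> omega

def Laminar (B : Finset (ℕ × ℕ)) : Prop :=
  (∀ p ∈ B, p.1 ≤ p.2) ∧ ∀ p ∈ B, ∀ q ∈ B, Compatible p q

lemma Laminar.subset {S B : Finset (ℕ × ℕ)} (hB : Laminar B) (hS : S ⊆ B) : Laminar S :=
  ⟨fun p hp => hB.1 p (hS hp), fun p hp q hq => hB.2 p (hS hp) q (hS hq)⟩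

lemma laminar_singleton (p : ℕ × ℕ) (hp : p.1 ≤ p.2) : Laminar {p} := by
  simp only [Laminar, Finset.mem_singleton, forall_eq]
  exact ⟨hp, Or.inl rfl⟩

lemma laminar_image_of_nested {s : Finset ℕ} {f : ℕ → ℕ × ℕ}
    (hf : ∀ j ∈ s, (f j).1 ≤ (f j).2) (hnest : ∀ j ∈ s, ∀ k ∈ s, j < k → Nested (f k) (f j)) :
    Laminar (s.image f) := by
  simp only [Laminar, Finset.forall_mem_image]
  refine ⟨hf, fun j hj k hk => ?_⟩
  rcases lt_trichotomy j k with hjk | rfl | hkj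
  · exact Or.inr (Or.inr (Or.inr (hnest j hj k hk hjk)))
  · exact Or.inl rfl
  · exact Or.inr (Or.inr (Or.inl (hnest k hk j hj hkj)))

lemma Laminar.tmap {B : Finset (ℕ × ℕ)} (hB : Laminar B) (i : ℕ) : Laminar (tmap i B) := by
  simp only [Laminar, _root_.tmap, Finset.forall_mem_union, Finset.forall_mem_image,
    Finset.mem_singleton, forall_eq]
  refine ⟨⟨fun p hp => tint_fst_le_snd i (hB.1 p hp), le_rfl⟩,
    ⟨fun p hp => ⟨fun q hq => (hB.2 p hp q hq).tint i (hB.1 p hp) (hB.1 q hq),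
      (compatible_diag_tint i (hB.1 p hp)).symm⟩,
    fun q hq => compatible_diag_tint i (hB.1 q hq), Or.inl rfl⟩⟩

lemma IsPrim.laminar {D : ℕ} {B : Finset (ℕ × ℕ)} (hB : IsPrim D B) : Laminar B := by
  rcases hB with rfl | ⟨-, k, -, hk, rfl⟩ | ⟨-, k, -, -, hk, rfl | rfl⟩
  · simp [Laminar]
  all_goals
    simp only [primEven, primOddA, primOddB]
    refine laminar_image_of_nested (fun j hj => ?_) fun j hj k hk hjk => ?_
    all_goals simp only [Finset.mem_Icc, Nested] at hj hk ⊢; omega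

lemma IsSS.laminar {D : ℕ} {B : Finset (ℕ × ℕ)} (hB : IsSS D B) : Laminar B := by
  induction hB with
  | prim D B hB => exact hB.laminar
  | one => exact laminar_singleton (1, 1) le_rfl
  | step D i B' _ _ _ ih => exact ih.tmap i

lemma exists_subset_sum_eq_of_mem_span {ι M : Type*} [AddCommGroup M] [Module (ZMod 2) M]
    {f : ι → M} {s : Finset ι} {x : M} (hx : x ∈ Submodule.span (ZMod 2) (f '' s)) :
    ∃ t ⊆ s, ∑ i ∈ t, f i = x := by
  obtain ⟨l, hl, rfl⟩ := (Finsupp.mem_span_image_iff_linearCombination _).mp hx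
  refine ⟨l.support, fun i hi => hl hi, ?_⟩
  rw [Finsupp.linearCombination_apply, Finsupp.sum]
  refine Finset.sum_congr rfl fun i hi => ?_
  have hli : l i ≠ 0 := Finsupp.mem_support_iff.mp hi
  have : l i = 1 := by revert hli; generalize l i = c; decide +revert
  rw [this, one_smul]

lemma eI_apply (p : ℕ × ℕ) (m : ℕ) :
    eI p m = if p.1 ≤ m ∧ m ≤ p.2 then 1 else 0 := by
  simp [eI, e, Finsupp.finsetSum_apply, Finsupp.single_apply]

lemma eI_apply_eq_one_iff {p : ℕ × ℕ} {m : ℕ} : eI p m = 1 ↔ p.1 ≤ m ∧ m ≤ p.2 := by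
  rw [eI_apply]
  split_ifs with h <;> simp [h]

lemma eI_apply_eq_zero_iff {p : ℕ × ℕ} {m : ℕ} : eI p m = 0 ↔ ¬(p.1 ≤ m ∧ m ≤ p.2) := by
  rw [eI_apply]
  split_ifs with h <;> simp [h]

lemma sum_eI_apply_eq_zero {S : Finset (ℕ × ℕ)} {m : ℕ} (h : ∀ p ∈ S, ¬(p.1 ≤ m ∧ m ≤ p.2)) :
    (∑ p ∈ S, eI p) m = 0 := by
  rw [Finsupp.finsetSum_apply]
  exact Finset.sum_eq_zero fun p hp => by rw [eI_apply, if_neg (h p hp)]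

lemma sum_eI_apply_eq_one {S : Finset (ℕ × ℕ)} {M : ℕ × ℕ} {m : ℕ} (hM : M ∈ S)
    (hm : M.1 ≤ m ∧ m ≤ M.2) (h : ∀ p ∈ S, p ≠ M → ¬(p.1 ≤ m ∧ m ≤ p.2)) :
    (∑ p ∈ S, eI p) m = 1 := by
  rw [Finsupp.finsetSum_apply, Finset.sum_eq_single_of_mem M hM
    fun p hp hpM => by rw [eI_apply, if_neg (h p hp hpM)], eI_apply, if_pos hm]

lemma Laminar.exists_leftmost {S : Finset (ℕ × ℕ)} (hS : Laminar S) (hne : S.Nonempty) :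
    ∃ M ∈ S, ∀ q ∈ S, q ≠ M → M.1 < q.1 ∧ (q.2 < M.2 ∨ M.2 + 2 ≤ q.1) := by
  obtain ⟨M, hM, hmin⟩ := S.exists_min_image Prod.fst hne
  refine ⟨M, hM, fun q hq hqM => ?_⟩
  have := hmin q hq
  have := hS.1 q hq
  have := hS.1 M hM
  rcases hS.2 q hq M hM with rfl | h | h | h
  · exact absurd rfl hqM
  all_goals simp only [Nontouch, Nested] at h; omega

lemma Laminar.mem_of_sum_eI_eq {S : Finset (ℕ × ℕ)} (hS : Laminar S) {J : ℕ × ℕ}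
    (hJ : J.1 ≤ J.2) (hsum : ∑ p ∈ S, eI p = eI J) : J ∈ S := by
  have hne : S.Nonempty := Finset.nonempty_of_sum_ne_zero fun h0 => by
    have hJ1 : eI J J.1 = 1 := eI_apply_eq_one_iff.2 ⟨le_rfl, hJ⟩
    rw [← hsum, h0] at hJ1
    exact zero_ne_one hJ1
  obtain ⟨M, hMS, hM⟩ := hS.exists_leftmost hne
  have hM_le := hS.1 M hMS
  have outside : ∀ m, m < M.1 ∨ m = M.2 + 1 → ∀ q ∈ S, ¬(q.1 ≤ m ∧ m ≤ q.2) := by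
    intro m hm q hq
    rcases eq_or_ne q M with rfl | hqM
    · omega
    · have := hM q hq hqM; omega
  have hbelow : M.1 ≤ J.1 := not_lt.1 fun h =>
    eI_apply_eq_zero_iff.1 (hsum ▸ sum_eI_apply_eq_zero (outside _ (.inl h))) ⟨le_rfl, hJ⟩
  have hafter : ¬(J.1 ≤ M.2 + 1 ∧ M.2 + 1 ≤ J.2) :=
    eI_apply_eq_zero_iff.1 (hsum ▸ sum_eI_apply_eq_zero (outside _ (.inr rfl)))
  have hleft : J.1 ≤ M.1 ∧ M.1 ≤ J.2 := eI_apply_eq_one_iff.1 <| hsum ▸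
    sum_eI_apply_eq_one hMS ⟨le_rfl, hM_le⟩ fun q hq hqM => by have := hM q hq hqM; omega
  have hright : J.1 ≤ M.2 ∧ M.2 ≤ J.2 := eI_apply_eq_one_iff.1 <| hsum ▸
    sum_eI_apply_eq_one hMS ⟨hM_le, le_rfl⟩ fun q hq hqM => by have := hM q hq hqM; omega
  obtain rfl : M = J := Prod.ext (by omega) (by omega)
  exact hMS

theorem stmt2_general (D : ℕ) (B : Finset (ℕ × ℕ)) (hB : IsSS D B)
    (a b : ℕ) (h2 : a ≤ b)
    (h : eI (a, b) ∈ EB B) : (a, b) ∈ B := by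
  obtain ⟨S, hSB, hsum⟩ := exists_subset_sum_eq_of_mem_span h
  exact hSB ((hB.laminar.subset hSB).mem_of_sum_eI_eq h2 hsum)

/-- if `J ⊆ [1,D]` is an interval with `e_J ∈ 𝔼_B`, then `J ∈ B`. -/
theorem stmt2 (D : ℕ) (B : Finset (ℕ × ℕ)) (hB : IsSS D B)
    (a b : ℕ) (h1 : 1 ≤ a) (h2 : a ≤ b) (h3 : b ≤ D)
    (h : eI (a, b) ∈ EB B) : (a, b) ∈ B :=
  stmt2_general D B hB a b h2 h
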